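/- Let a, b ∈ ℂ with |a| = |b| = 1, Im(a) > 0, Im(b) > 0 and a ≠ b. Set u = (1 + a·b)/(a + b) (a real number with |u| < 1), t = |a − b| / |a·b − 1|, and T = ((1 + √(1 − u²)) · t · √(1 − t²)) / √(1 − u²·t²). Then v(a,b) = arcsin(T) if 1 ≥ (1 + √(1 − u²))·t², and v(a,b) = π − arcsin(T) if 1 < (1 + √(1 − u²))·t². -/

import Mathlib

/-!
Write `a = ζ ω` and `b = conj ζ ω` with `ζ = e^{i(α-β)/2}`, `ω = e^{i(α+β)/2}` on the unit circle.
Since `(a - x) / (b - x)` is a positive multiple of `(a - x) conj (b - x) = x² - 2 (Re ω) x ζ + ζ²`,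
the angle at `x` is at most `π/2 - arctan K` exactly when `K |Im| ≤ Re` for this quadratic. With
`c = Re ζ`, `m = |Im ζ|`, `f = Re ω` and `g = √(c² - f²)` the best constant is
`K = (c g - m²) / (m (c + g))`, attained at the point of tangency `x₀ = f / (c + g)` of a circle
through `a` and `b` with the real axis. Finally `T = cos (arctan K)`, and the sign of `K` tells
whether the visual angle is acute.
-/

open Complex ComplexConjugate

/-- The visual angle metric of the upper half plane:
`v(a,b) = sup {∠(a,x,b) : x ∈ ℝ}`, where the angle at the real vertex `x`
is `|arg((a−x)/(b−x))|`. -/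
noncomputable def vAngle (a b : ℂ) : ℝ :=
  ⨆ x : ℝ, |((a - (x : ℂ)) / (b - (x : ℂ))).arg|

open scoped Real

namespace Complex

theorem arg_div_eq_arg_mul_conj (z w : ℂ) : arg (z / w) = arg (z * conj w) := by
  rcases eq_or_ne w 0 with rfl | hw
  · simp
  rw [div_eq_mul_inv, inv_def, ← mul_assoc, mul_comm, arg_real_mul _ (inv_pos.2 (normSq_pos.2 hw))]

theorem arg_eq_pi_div_two_sub_arctan {z : ℂ} (hz : 0 < z.im) :
    arg z = π / 2 - Real.arctan (z.re / z.im) := by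
  set y := z.re / z.im
  have hr : 0 < z.im * √(1 + y ^ 2) := by positivity
  have hpolar : z = ↑(z.im * √(1 + y ^ 2)) * (cos ↑(π / 2 - Real.arctan y) +
      sin ↑(π / 2 - Real.arctan y) * I) := by
    rw [← ofReal_cos, ← ofReal_sin, Real.cos_pi_div_two_sub, Real.sin_pi_div_two_sub,
      Real.sin_arctan, Real.cos_arctan, ← mk_eq_add_mul_I]
    apply Complex.ext <;> simp only [re_ofReal_mul, im_ofReal_mul]
    · field_simp
      exact (mul_div_cancel₀ _ hz.ne').symm
    · field_simp
  rw [hpolar, arg_mul_cos_add_sin_mul_I hr]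
  constructor <;> linarith [Real.arctan_lt_pi_div_two y, Real.neg_pi_div_two_lt_arctan y,
    Real.pi_pos]

theorem abs_arg_conj {z : ℂ} (hz : z.im ≠ 0) : |arg (conj z)| = |arg z| := by
  rw [arg_conj, if_neg (fun h => hz (arg_eq_pi_iff.1 h).2), abs_neg]

theorem abs_arg_eq_pi_div_two_sub_arctan {z : ℂ} (hz : z.im ≠ 0) :
    |arg z| = π / 2 - Real.arctan (z.re / |z.im|) := by
  wlog hpos : 0 < z.im generalizing z
  · rw [← abs_arg_conj hz, this (by simpa using hz) (neg_pos.2 ((not_lt.1 hpos).lt_of_ne hz)),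
      conj_re, conj_im, abs_neg]
  rw [abs_of_pos hpos, arg_eq_pi_div_two_sub_arctan hpos, abs_of_pos]
  linarith [Real.arctan_lt_pi_div_two (z.re / z.im)]

theorem abs_arg_le_pi_div_two_sub_arctan {z : ℂ} {K : ℝ} (h : K * |z.im| ≤ z.re) :
    |arg z| ≤ π / 2 - Real.arctan K := by
  rcases eq_or_ne z.im 0 with him | him
  · rw [arg_eq_zero_iff.2 ⟨by simpa [him] using h, him⟩, abs_zero, sub_nonneg]
    exact (Real.arctan_lt_pi_div_two K).le
  rw [abs_arg_eq_pi_div_two_sub_arctan him, sub_le_sub_iff_left, Real.arctan_le_arctan_iff,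
    le_div_iff₀ (abs_pos.2 him)]
  exact h

theorem abs_arg_eq_pi_div_two_sub_arctan_of_mul_eq {z : ℂ} {K : ℝ} (hz : z.im ≠ 0)
    (h : K * |z.im| = z.re) : |arg z| = π / 2 - Real.arctan K := by
  rw [abs_arg_eq_pi_div_two_sub_arctan hz, ← h, mul_div_cancel_right₀ _ (abs_ne_zero.2 hz)]

theorem arg_mem_Ioo_of_im_pos {z : ℂ} (hz : 0 < z.im) : arg z ∈ Set.Ioo 0 π :=
  ⟨(arg_nonneg_iff.2 hz.le).lt_of_ne fun h => hz.ne' (arg_eq_zero_iff.1 h.symm).2,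
    arg_lt_pi_iff.2 (Or.inr hz.ne')⟩

theorem mul_conj_eq_one {ζ : ℂ} (hζ : ‖ζ‖ = 1) : ζ * conj ζ = 1 := by
  rw [mul_conj, normSq_eq_norm_sq, hζ]; simp

theorem im_sq_of_norm_eq_one {ζ : ℂ} (hζ : ‖ζ‖ = 1) : ζ.im ^ 2 = 1 - ζ.re ^ 2 := by
  rw [← sq_norm_sub_sq_re, hζ, one_pow]

theorem re_sq_add_abs_im_sq {ζ : ℂ} (hζ : ‖ζ‖ = 1) : ζ.re ^ 2 + |ζ.im| ^ 2 = 1 := by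
  rw [sq_abs, im_sq_of_norm_eq_one hζ]; ring

end Complex

theorem Real.arcsin_cos_arctan (x : ℝ) : arcsin (cos (arctan x)) = π / 2 - |arctan x| := by
  rw [arcsin_eq_pi_div_two_sub_arccos, ← cos_abs, arccos_cos (abs_nonneg _)]
  linarith [abs_lt.2 ⟨neg_pi_div_two_lt_arctan x, arctan_lt_pi_div_two x⟩, pi_pos]

theorem Real.sqrt_one_sub_div_sq {y : ℝ} (hy : 0 < y) (x : ℝ) :
    √(1 - (x / y) ^ 2) = √(y ^ 2 - x ^ 2) / y := by
  rw [show 1 - (x / y) ^ 2 = (y ^ 2 - x ^ 2) / y ^ 2 by field_simp,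
    sqrt_div' _ (sq_nonneg y), sqrt_sq hy.le]

theorem vAngle_eq_pi_div_two_sub_arctan {a b : ℂ} {K : ℝ}
    (hle : ∀ x : ℝ, K * |((a - x) * conj (b - x)).im| ≤ ((a - x) * conj (b - x)).re) {x₀ : ℝ}
    (hne : ((a - x₀) * conj (b - x₀)).im ≠ 0)
    (heq : K * |((a - x₀) * conj (b - x₀)).im| = ((a - x₀) * conj (b - x₀)).re) :
    vAngle a b = π / 2 - Real.arctan K := by
  simp only [vAngle, arg_div_eq_arg_mul_conj]
  refine ciSup_eq_of_forall_le_of_forall_lt_exists_gt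
    (fun x => abs_arg_le_pi_div_two_sub_arctan (hle x)) fun w hw => ⟨x₀, ?_⟩
  rwa [abs_arg_eq_pi_div_two_sub_arctan_of_mul_eq hne heq]

section TangentCircle

-- `c, m, f, g` and `K` are as in the header, and `n = |Im ω|`.

variable {c f g m n K : ℝ}

theorem sub_mul_eq_of_tangent (hcg : 0 < c + g) (hfg : f ^ 2 + g ^ 2 = c ^ 2) {x : ℝ}
    (hx : (c + g) * x = f) : c - f * x = g := by
  apply mul_left_cancel₀ hcg.ne'
  linear_combination (-f) * hx - hfg

theorem mul_abs_le_of_tangent (hc : 0 < c) (hg : 0 ≤ g) (hcm : c ^ 2 + m ^ 2 = 1)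
    (hfg : f ^ 2 + g ^ 2 = c ^ 2) (hK : K * (m * (c + g)) = c * g - m ^ 2) (x : ℝ) :
    K * (2 * m * |c - f * x|) ≤ x ^ 2 - 2 * f * x * c + c ^ 2 - m ^ 2 := by
  have hcg : 0 < c + g := by positivity
  rcases le_or_gt 0 (c - f * x) with hx | hx
  · rw [abs_of_nonneg hx]
    refine le_of_mul_le_mul_right ?_ (pow_pos hcg 2)
    linear_combination sq_nonneg ((c + g) * x - f) + 2 * (c - f * x) * (c + g) * hK
      + (2 * f * (c + g) * x - c ^ 2 + g ^ 2) * hcm + hfg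
  · have hf : f ≠ 0 := by rintro rfl; linarith
    have hgc : g < c := by nlinarith [sq_pos_of_ne_zero hf]
    have hKm : K * m * (c - g) ≤ c * g + m ^ 2 := by
      refine le_of_mul_le_mul_right ?_ hcg
      linear_combination 2 * mul_nonneg hc.le (add_nonneg (sq_nonneg g) (sq_nonneg m)) +
        (c - g) * hK
    have hscale := mul_le_mul_of_nonneg_left hKm
      (mul_nonneg (mul_nonneg zero_le_two (neg_nonneg.2 hx.le)) (sub_nonneg.2 hgc.le))
    rw [abs_of_neg hx]
    refine le_of_mul_le_mul_right ?_ (pow_pos (sub_pos.2 hgc) 2)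
    linear_combination sq_nonneg ((c - g) * x - f) + hscale
      + (2 * f * (c - g) * x - c ^ 2 + g ^ 2) * hcm + hfg

theorem mul_abs_eq_of_tangent (hg : 0 ≤ g) (hcg : 0 < c + g) (hcm : c ^ 2 + m ^ 2 = 1)
    (hfg : f ^ 2 + g ^ 2 = c ^ 2) (hK : K * (m * (c + g)) = c * g - m ^ 2) {x : ℝ}
    (hx : (c + g) * x = f) :
    K * (2 * m * |c - f * x|) = x ^ 2 - 2 * f * x * c + c ^ 2 - m ^ 2 := by
  have hsub := sub_mul_eq_of_tangent hcg hfg hx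
  rw [hsub, abs_of_nonneg hg]
  apply mul_right_cancel₀ (pow_pos hcg 2).ne'
  linear_combination (f - (c + g) * x) * hx - 2 * (c + g) * (c * g - m ^ 2) * hsub
    + 2 * (c + g) * g * hK + (2 * f * (c + g) * x - c ^ 2 + g ^ 2) * hcm + hfg

theorem cos_arctan_of_tangent (hc : 0 < c) (hg : 0 ≤ g) (hm : 0 < m) (hn : 0 < n)
    (hcm : c ^ 2 + m ^ 2 = 1) (hn2 : n ^ 2 = m ^ 2 + g ^ 2)
    (hK : K * (m * (c + g)) = c * g - m ^ 2) :
    Real.cos (Real.arctan K) = m * (c + g) / n := by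
  have hmcg : 0 < m * (c + g) := by positivity
  have h1K : 1 + K ^ 2 = (n / (m * (c + g))) ^ 2 := by
    rw [eq_div_of_mul_eq hmcg.ne' hK]
    field_simp
    linear_combination (m ^ 2 + g ^ 2) * hcm - hn2
  rw [Real.cos_arctan, h1K, Real.sqrt_sq (by positivity), one_div_div]

theorem one_add_sqrt_mul_mul_sqrt_div_sqrt_of_tangent (hc : 0 < c) (hg : 0 < g) (hn : 0 < n)
    (hcm : c ^ 2 + m ^ 2 = 1) (hfg : f ^ 2 + g ^ 2 = c ^ 2) (hn2 : n ^ 2 = m ^ 2 + g ^ 2) :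
    (1 + √(1 - (f / c) ^ 2)) * (m / n) * √(1 - (m / n) ^ 2) / √(1 - (f / c) ^ 2 * (m / n) ^ 2) =
      m * (c + g) / n := by
  rw [show (f / c) ^ 2 * (m / n) ^ 2 = (f * m / (c * n)) ^ 2 by ring,
    Real.sqrt_one_sub_div_sq hc, Real.sqrt_one_sub_div_sq hn,
    Real.sqrt_one_sub_div_sq (mul_pos hc hn), show c ^ 2 - f ^ 2 = g ^ 2 by linarith,
    show n ^ 2 - m ^ 2 = g ^ 2 by linarith,
    show (c * n) ^ 2 - (f * m) ^ 2 = g ^ 2 by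
      linear_combination c ^ 2 * hn2 + g ^ 2 * hcm - m ^ 2 * hfg,
    Real.sqrt_sq hg.le]
  field_simp

theorem one_ge_one_add_sqrt_mul_sq_iff_of_tangent (hc : 0 < c) (hg : 0 < g) (hm : 0 < m)
    (hn : 0 < n) (hfg : f ^ 2 + g ^ 2 = c ^ 2) (hn2 : n ^ 2 = m ^ 2 + g ^ 2)
    (hK : K * (m * (c + g)) = c * g - m ^ 2) :
    1 ≥ (1 + √(1 - (f / c) ^ 2)) * (m / n) ^ 2 ↔ 0 ≤ K := by
  rw [Real.sqrt_one_sub_div_sq hc, show c ^ 2 - f ^ 2 = g ^ 2 by linarith, Real.sqrt_sq hg.le,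
    ← mul_nonneg_iff_of_pos_right (show 0 < m * (c + g) by positivity), hK,
    show (1 + g / c) * (m / n) ^ 2 = (c + g) * m ^ 2 / (c * n ^ 2) by field_simp,
    ge_iff_le, div_le_one (by positivity), ← mul_nonneg_iff_of_pos_left hg, ← sub_nonneg]
  constructor
  · intro h; linear_combination h + c * hn2
  · intro h; linear_combination h - c * hn2

theorem pi_div_two_sub_arctan_eq_arcsin_of_tangent {u t T : ℝ} (hc : 0 < c) (hg : 0 < g)
    (hm : 0 < m) (hn : 0 < n) (hcm : c ^ 2 + m ^ 2 = 1) (hfg : f ^ 2 + g ^ 2 = c ^ 2)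
    (hn2 : n ^ 2 = m ^ 2 + g ^ 2) (hK : K * (m * (c + g)) = c * g - m ^ 2) (hu : u = f / c)
    (ht : t = m / n)
    (hT : T = (1 + √(1 - u ^ 2)) * t * √(1 - t ^ 2) / √(1 - u ^ 2 * t ^ 2)) :
    |u| < 1 ∧
    (1 ≥ (1 + √(1 - u ^ 2)) * t ^ 2 → π / 2 - Real.arctan K = Real.arcsin T) ∧
    (1 < (1 + √(1 - u ^ 2)) * t ^ 2 → π / 2 - Real.arctan K = π - Real.arcsin T) := by
  subst hu ht
  have hTK : T = Real.cos (Real.arctan K) := by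
    rw [hT, one_add_sqrt_mul_mul_sqrt_div_sqrt_of_tangent hc hg hn hcm hfg hn2,
      cos_arctan_of_tangent hc hg.le hm hn hcm hn2 hK]
  have hcond := one_ge_one_add_sqrt_mul_sq_iff_of_tangent hc hg hm hn hfg hn2 hK
  refine ⟨?_, fun h => ?_, fun h => ?_⟩
  · rw [abs_div, abs_of_pos hc, div_lt_one hc]
    exact abs_lt_of_sq_lt_sq (by nlinarith) hc.le
  · rw [hTK, Real.arcsin_cos_arctan, abs_of_nonneg (Real.arctan_nonneg.2 (hcond.1 h))]
  · have hK0 : K < 0 := not_le.1 fun hK0 => (not_le.2 h) (hcond.2 hK0)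
    rw [hTK, Real.arcsin_cos_arctan, abs_of_neg (Real.arctan_lt_zero.2 hK0)]
    ring

end TangentCircle

section UnitCircle

variable {ζ ω : ℂ}

theorem exists_eq_mul_conj_mul {a b : ℂ} (ha : ‖a‖ = 1) (hb : ‖b‖ = 1) (hia : 0 < a.im)
    (hib : 0 < b.im) :
    ∃ ζ ω : ℂ, ‖ζ‖ = 1 ∧ ‖ω‖ = 1 ∧ 0 < ζ.re ∧ a = ζ * ω ∧ b = conj ζ * ω := by
  obtain ⟨hα₀, hα₁⟩ := arg_mem_Ioo_of_im_pos hia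
  obtain ⟨hβ₀, hβ₁⟩ := arg_mem_Ioo_of_im_pos hib
  refine ⟨exp (↑((arg a - arg b) / 2) * I), exp (↑((arg a + arg b) / 2) * I),
    norm_exp_ofReal_mul_I _, norm_exp_ofReal_mul_I _, ?_, ?_, ?_⟩
  · rw [exp_ofReal_mul_I_re]
    exact Real.cos_pos_of_mem_Ioo ⟨by linarith, by linarith⟩
  · conv_lhs => rw [← norm_mul_exp_arg_mul_I a, ha]
    rw [← exp_add, ofReal_one, one_mul]
    congr 1
    push_cast
    ring
  · conv_lhs => rw [← norm_mul_exp_arg_mul_I b, hb]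
    rw [← exp_conj, ← exp_add, ofReal_one, one_mul]
    congr 1
    simp only [map_mul, conj_ofReal, conj_I]
    push_cast
    ring

theorem mul_mul_conj_mul (hζ : ‖ζ‖ = 1) : ζ * ω * (conj ζ * ω) = ω ^ 2 := by
  linear_combination ω ^ 2 * mul_conj_eq_one hζ

theorem sub_mul_conj_sub (hω : ‖ω‖ = 1) (x : ℝ) :
    (ζ * ω - x) * conj (conj ζ * ω - x) =
      ⟨x ^ 2 - 2 * ω.re * x * ζ.re + ζ.re ^ 2 - ζ.im ^ 2, 2 * ζ.im * (ζ.re - ω.re * x)⟩ := by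
  have hre := add_conj ω
  push_cast at hre
  have hquad : (ζ * ω - x) * conj (conj ζ * ω - x) = x ^ 2 - 2 * ω.re * x * ζ + ζ ^ 2 := by
    simp only [map_sub, map_mul, conj_conj, conj_ofReal]
    linear_combination ζ ^ 2 * mul_conj_eq_one hω - x * ζ * hre
  rw [hquad]
  apply Complex.ext <;>
    simp only [sq, add_re, sub_re, mul_re, add_im, sub_im, mul_im, ofReal_re, ofReal_im, re_ofNat,
      im_ofNat, mul_zero, zero_mul, sub_zero, add_zero, zero_sub] <;> ring

theorem one_add_mul_div_add (hζ : ‖ζ‖ = 1) (hω : ‖ω‖ = 1) (hc : ζ.re ≠ 0) :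
    (1 + ζ * ω * (conj ζ * ω)) / (ζ * ω + conj ζ * ω) = ((ω.re / ζ.re : ℝ) : ℂ) := by
  have hω0 : ω ≠ 0 := norm_ne_zero_iff.1 (by rw [hω]; exact one_ne_zero)
  have hc' : (ζ.re : ℂ) ≠ 0 := by exact_mod_cast hc
  rw [mul_mul_conj_mul hζ, ← add_mul, add_conj]
  have hre := add_conj ω
  push_cast at hre ⊢
  field_simp
  linear_combination ω * hre - mul_conj_eq_one hω

theorem norm_mul_sub_conj_mul (hω : ‖ω‖ = 1) : ‖ζ * ω - conj ζ * ω‖ = 2 * |ζ.im| := by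
  rw [← sub_mul, sub_conj, norm_mul, hω, mul_one, norm_mul, norm_I, mul_one, norm_real,
    Real.norm_eq_abs, abs_mul, abs_two]

theorem norm_sq_sub_one (hω : ‖ω‖ = 1) : ‖ω ^ 2 - 1‖ = 2 * |ω.im| := by
  have : ω ^ 2 - 1 = ω * (ω - conj ω) := by linear_combination mul_conj_eq_one hω
  rw [this, sub_conj, norm_mul, hω, one_mul, norm_mul, norm_I, mul_one, norm_real,
    Real.norm_eq_abs, abs_mul, abs_two]

theorem im_mul_mul_im_conj_mul (hζ : ‖ζ‖ = 1) (hω : ‖ω‖ = 1) :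
    (ζ * ω).im * (conj ζ * ω).im = ζ.re ^ 2 - ω.re ^ 2 := by
  simp only [mul_im, conj_re, conj_im]
  linear_combination ζ.re ^ 2 * im_sq_of_norm_eq_one hω - ω.re ^ 2 * im_sq_of_norm_eq_one hζ

theorem vAngle_mul_conj_mul {g K : ℝ} (hζ : ‖ζ‖ = 1) (hω : ‖ω‖ = 1) (hc : 0 < ζ.re)
    (hμ : ζ.im ≠ 0) (hg : 0 < g) (hfg : ω.re ^ 2 + g ^ 2 = ζ.re ^ 2)
    (hK : K * (|ζ.im| * (ζ.re + g)) = ζ.re * g - |ζ.im| ^ 2) :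
    vAngle (ζ * ω) (conj ζ * ω) = π / 2 - Real.arctan K := by
  have hcm := re_sq_add_abs_im_sq hζ
  have hre (x : ℝ) : ((ζ * ω - x) * conj (conj ζ * ω - x)).re =
      x ^ 2 - 2 * ω.re * x * ζ.re + ζ.re ^ 2 - |ζ.im| ^ 2 := by
    rw [sub_mul_conj_sub hω, sq_abs]
  have him (x : ℝ) : |((ζ * ω - x) * conj (conj ζ * ω - x)).im| =
      2 * |ζ.im| * |ζ.re - ω.re * x| := by
    rw [sub_mul_conj_sub hω, abs_mul, abs_mul, abs_two]
  have hcg : 0 < ζ.re + g := by positivity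
  have hx₀ : (ζ.re + g) * (ω.re / (ζ.re + g)) = ω.re := mul_div_cancel₀ _ hcg.ne'
  refine vAngle_eq_pi_div_two_sub_arctan (x₀ := ω.re / (ζ.re + g)) (fun x => ?_) ?_ ?_
  · rw [hre, him]
    exact mul_abs_le_of_tangent hc hg.le hcm hfg hK x
  · rw [← abs_ne_zero, him, sub_mul_eq_of_tangent hcg hfg hx₀]
    positivity
  · rw [hre, him]
    exact mul_abs_eq_of_tangent hg.le hcg hcm hfg hK hx₀

end UnitCircle

theorem vAngle_eq_arcsin (a b : ℂ)
    (ha : ‖a‖ = 1) (hb : ‖b‖ = 1)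
    (hia : 0 < a.im) (hib : 0 < b.im) (hab : a ≠ b)
    (u : ℝ) (hu : (u : ℂ) = (1 + a * b) / (a + b))
    (t T : ℝ) (ht : t = ‖a - b‖ / ‖a * b - 1‖)
    (hT : T = ((1 + Real.sqrt (1 - u ^ 2)) * t * Real.sqrt (1 - t ^ 2)) /
        Real.sqrt (1 - u ^ 2 * t ^ 2)) :
    |u| < 1 ∧
    (1 ≥ (1 + Real.sqrt (1 - u ^ 2)) * t ^ 2 → vAngle a b = Real.arcsin T) ∧
    (1 < (1 + Real.sqrt (1 - u ^ 2)) * t ^ 2 → vAngle a b = Real.pi - Real.arcsin T) := by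
  obtain ⟨ζ, ω, hζ, hω, hc, rfl, rfl⟩ := exists_eq_mul_conj_mul ha hb hia hib
  have hμ : ζ.im ≠ 0 := fun h => hab (by rw [conj_eq_iff_im.2 h])
  have hfc : 0 < ζ.re ^ 2 - ω.re ^ 2 := by
    rw [← im_mul_mul_im_conj_mul hζ hω]; positivity
  set g := √(ζ.re ^ 2 - ω.re ^ 2)
  have hg : 0 < g := Real.sqrt_pos.2 hfc
  have hfg : ω.re ^ 2 + g ^ 2 = ζ.re ^ 2 := by rw [Real.sq_sqrt hfc.le]; ring
  have hn2 : |ω.im| ^ 2 = |ζ.im| ^ 2 + g ^ 2 := by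
    linear_combination re_sq_add_abs_im_sq hω - re_sq_add_abs_im_sq hζ - hfg
  have hn : 0 < |ω.im| := by nlinarith [abs_nonneg ω.im, mul_pos hg hg]
  set K := (ζ.re * g - |ζ.im| ^ 2) / (|ζ.im| * (ζ.re + g))
  have hK : K * (|ζ.im| * (ζ.re + g)) = ζ.re * g - |ζ.im| ^ 2 :=
    div_mul_cancel₀ _ (by positivity)
  rw [vAngle_mul_conj_mul hζ hω hc hμ hg hfg hK]
  refine pi_div_two_sub_arctan_eq_arcsin_of_tangent hc hg (abs_pos.2 hμ) hn
    (re_sq_add_abs_im_sq hζ) hfg hn2 hK ?_ ?_ hT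
  · exact_mod_cast hu.trans (one_add_mul_div_add hζ hω hc.ne')
  · rw [ht, norm_mul_sub_conj_mul hω, mul_mul_conj_mul hζ, norm_sq_sub_one hω,
      mul_div_mul_left _ _ two_ne_zero]
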